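/- arXiv:1905.02490 — 2 statements merged into one kernel-verified Lean document; each statement's English description precedes it below -/
import Mathlib

section
/- Suppose A = {a, b}, G = {(a,b),(b,a)}, mode a is controllable, every successor set from a covers all of M_b via mode-b trajectories (condition (4.1)), and from every point of M_b some mode-b trajectory reaches the jump set B_b (condition (4.2)), with the jump relation from b to a nonempty on all of B_b. Then the hybrid control system is globally controllable. -/
/-- Theorem 4.6 (abstract): two modes `a`, `b`, both transitions feasible, mode `a`
controllable; if every successor set from `a` covers all of `M_b` by mode-`b`
trajectories (4.1), and from every point of `M_b` some mode-`b` trajectory reaches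
the jump set `B_b` (4.2), with jumps from `b` to `a` nonempty on `B_b`, then the
hybrid control system is globally controllable. -/
theorem global_controllability_two_modes_one_controllable
    {Ma Mb : Type*} [Nonempty Ma] [Nonempty Mb]
    (Ra : Ma → Ma → Prop) (Rb : Mb → Mb → Prop)
    (hRarefl : Reflexive Ra) (hRatrans : Transitive Ra)
    (hRbrefl : Reflexive Rb) (hRbtrans : Transitive Rb)
    (Ba : Set Ma) (Bb : Set Mb)
    (Jab : Ma → Mb → Prop) (Jba : Mb → Ma → Prop)
    (hJabdom : ∀ x y, Jab x y → x ∈ Ba)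
    (hJbadom : ∀ x y, Jba x y → x ∈ Bb)
    (hBa : Ba.Nonempty)
    (hactrl : ∀ x y : Ma, Ra x y)
    (h41 : ∀ ya ∈ Ba, ∀ w : Mb, ∃ z : Mb, Jab ya z ∧ Rb z w)
    (h42a : ∀ x : Mb, ∃ y ∈ Bb, Rb x y)
    (h42b : ∀ y ∈ Bb, ∃ z : Ma, Jba y z) :
    ∀ p q : Ma ⊕ Mb,
      Relation.ReflTransGen
        (fun p q =>
          match p, q with
          | Sum.inl x, Sum.inl y => Ra x y
          | Sum.inl x, Sum.inr y => x ∈ Ba ∧ Jab x y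
          | Sum.inr x, Sum.inl y => x ∈ Bb ∧ Jba x y
          | Sum.inr x, Sum.inr y => Rb x y) p q := by
  set R : (Ma ⊕ Mb) → (Ma ⊕ Mb) → Prop := fun p q =>
      match p, q with
      | Sum.inl x, Sum.inl y => Ra x y
      | Sum.inl x, Sum.inr y => x ∈ Ba ∧ Jab x y
      | Sum.inr x, Sum.inl y => x ∈ Bb ∧ Jba x y
      | Sum.inr x, Sum.inr y => Rb x y with hR
  -- from inl x to inr w
  have hAB : ∀ (x : Ma) (w : Mb), Relation.ReflTransGen R (Sum.inl x) (Sum.inr w) := by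
    intro x w
    obtain ⟨ya, hya⟩ := hBa
    obtain ⟨z, hjab, hrb⟩ := h41 ya hya w
    exact Relation.ReflTransGen.head (b := Sum.inl ya) (hactrl x ya)
      (Relation.ReflTransGen.head (b := Sum.inr z) ⟨hya, hjab⟩
        (Relation.ReflTransGen.single (a := Sum.inr z) hrb))
  -- from inr x to inl y
  have hBA : ∀ (x : Mb) (y : Ma), Relation.ReflTransGen R (Sum.inr x) (Sum.inl y) := by
    intro x y
    obtain ⟨yb, hyb, hrb⟩ := h42a x
    obtain ⟨z, hjba⟩ := h42b yb hyb
    exact Relation.ReflTransGen.head (b := Sum.inr yb) hrb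
      (Relation.ReflTransGen.head (b := Sum.inl z) ⟨hyb, hjba⟩
        (Relation.ReflTransGen.single (a := Sum.inl z) (hactrl z y)))
  intro p q
  obtain ⟨za⟩ := ‹Nonempty Ma›
  cases p with
  | inl x =>
    cases q with
    | inl y => exact Relation.ReflTransGen.single (hactrl x y)
    | inr w => exact hAB x w
  | inr x =>
    cases q with
    | inl y => exact hBA x y
    | inr w => exact (hBA x za).trans (hAB za w)
end

section
/- In the submarine/tides hybrid system, neither mode alone is controllable (each mode's reachable sets are horizontal lines, hence proper subsets of its 2-dimensional domain), but the hybrid system combining rightward motion in mode 1, leftward motion in mode 2, and jumps at x = k₂ (mode 1 → 2, arbitrary reset of y below h₁) and at x = k₁ (mode 2 → 1, arbitrary reset of y above h₁) is globally controllable. -/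
/-- Submarine/tides example (Section 4.1): neither mode alone is controllable
(reachable sets are horizontal half-lines), but the hybrid system with jumps at
`x = k₂` (mode 1 → 2) and `x = k₁` (mode 2 → 1) is globally controllable. -/
theorem submarine_hybrid_globally_controllable
    (k₁ k₂ h₁ : ℝ) (hk : k₁ < k₂)
    (Reach₁ : {p : ℝ × ℝ // k₁ ≤ p.1 ∧ p.1 ≤ k₂ ∧ h₁ < p.2} →
              {p : ℝ × ℝ // k₁ ≤ p.1 ∧ p.1 ≤ k₂ ∧ h₁ < p.2} → Prop)
    (hR₁ : ∀ p q, Reach₁ p q ↔ q.1.2 = p.1.2 ∧ p.1.1 ≤ q.1.1)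
    (Reach₂ : {p : ℝ × ℝ // k₁ ≤ p.1 ∧ p.1 ≤ k₂ ∧ p.2 ≤ h₁} →
              {p : ℝ × ℝ // k₁ ≤ p.1 ∧ p.1 ≤ k₂ ∧ p.2 ≤ h₁} → Prop)
    (hR₂ : ∀ p q, Reach₂ p q ↔ q.1.2 = p.1.2 ∧ q.1.1 ≤ p.1.1)
    (J₁₂ : {p : ℝ × ℝ // k₁ ≤ p.1 ∧ p.1 ≤ k₂ ∧ h₁ < p.2} →
           {p : ℝ × ℝ // k₁ ≤ p.1 ∧ p.1 ≤ k₂ ∧ p.2 ≤ h₁} → Prop)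
    (hJ₁₂ : ∀ p q, J₁₂ p q ↔ p.1.1 = k₂ ∧ q.1.1 = k₂)
    (J₂₁ : {p : ℝ × ℝ // k₁ ≤ p.1 ∧ p.1 ≤ k₂ ∧ p.2 ≤ h₁} →
           {p : ℝ × ℝ // k₁ ≤ p.1 ∧ p.1 ≤ k₂ ∧ h₁ < p.2} → Prop)
    (hJ₂₁ : ∀ p q, J₂₁ p q ↔ p.1.1 = k₁ ∧ q.1.1 = k₁) :
    (¬ ∀ p q, Reach₁ p q) ∧ (¬ ∀ p q, Reach₂ p q) ∧
    (∀ p q : {p : ℝ × ℝ // k₁ ≤ p.1 ∧ p.1 ≤ k₂ ∧ h₁ < p.2} ⊕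
             {p : ℝ × ℝ // k₁ ≤ p.1 ∧ p.1 ≤ k₂ ∧ p.2 ≤ h₁},
      Relation.ReflTransGen
        (fun p q =>
          match p, q with
          | Sum.inl x, Sum.inl y => Reach₁ x y
          | Sum.inl x, Sum.inr y => J₁₂ x y
          | Sum.inr x, Sum.inl y => J₂₁ x y
          | Sum.inr x, Sum.inr y => Reach₂ x y) p q) := by
  constructor
  · intro h
    have := (hR₁ ⟨(k₁, h₁+1), le_refl _, hk.le, by norm_num⟩
                 ⟨(k₁, h₁+2), le_refl _, hk.le, by norm_num⟩).mp (h _ _)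
    have h2 := this.1; norm_num at h2
  constructor
  · intro h
    have := (hR₂ ⟨(k₁, h₁), le_refl _, hk.le, le_refl _⟩
                 ⟨(k₁, h₁-1), le_refl _, hk.le, by norm_num⟩).mp (h _ _)
    have h2 := this.1; norm_num at h2
  · intro p q
    set S := (fun p q =>
          match p, q with
          | Sum.inl x, Sum.inl y => Reach₁ x y
          | Sum.inl x, Sum.inr y => J₁₂ x y
          | Sum.inr x, Sum.inl y => J₂₁ x y
          | Sum.inr x, Sum.inr y => Reach₂ x y) with hS
    -- helper points
    match p, q with
    | Sum.inl a, Sum.inl b =>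
      obtain ⟨⟨ax, ay⟩, ha1, ha2, ha3⟩ := a
      obtain ⟨⟨bx, by'⟩, hb1, hb2, hb3⟩ := b
      refine Relation.ReflTransGen.head (b := Sum.inl ⟨(k₂, ay), hk.le, le_refl _, ha3⟩)
        ((hR₁ _ _).mpr ⟨rfl, ha2⟩) ?_
      refine Relation.ReflTransGen.head (b := Sum.inr ⟨(k₂, h₁), hk.le, le_refl _, le_refl _⟩)
        ((hJ₁₂ _ _).mpr ⟨rfl, rfl⟩) ?_
      refine Relation.ReflTransGen.head (b := Sum.inr ⟨(k₁, h₁), le_refl _, hk.le, le_refl _⟩)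
        ((hR₂ _ _).mpr ⟨rfl, hk.le⟩) ?_
      refine Relation.ReflTransGen.head (b := Sum.inl ⟨(k₁, by'), le_refl _, hk.le, hb3⟩)
        ((hJ₂₁ _ _).mpr ⟨rfl, rfl⟩) ?_
      exact Relation.ReflTransGen.single ((hR₁ _ _).mpr ⟨rfl, hb1⟩)
    | Sum.inl a, Sum.inr b =>
      obtain ⟨⟨ax, ay⟩, ha1, ha2, ha3⟩ := a
      obtain ⟨⟨bx, by'⟩, hb1, hb2, hb3⟩ := b
      refine Relation.ReflTransGen.head (b := Sum.inl ⟨(k₂, ay), hk.le, le_refl _, ha3⟩)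
        ((hR₁ _ _).mpr ⟨rfl, ha2⟩) ?_
      refine Relation.ReflTransGen.head (b := Sum.inr ⟨(k₂, by'), hk.le, le_refl _, hb3⟩)
        ((hJ₁₂ _ _).mpr ⟨rfl, rfl⟩) ?_
      exact Relation.ReflTransGen.single ((hR₂ _ _).mpr ⟨rfl, hb2⟩)
    | Sum.inr a, Sum.inl b =>
      obtain ⟨⟨ax, ay⟩, ha1, ha2, ha3⟩ := a
      obtain ⟨⟨bx, by'⟩, hb1, hb2, hb3⟩ := b
      refine Relation.ReflTransGen.head (b := Sum.inr ⟨(k₁, ay), le_refl _, hk.le, ha3⟩)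
        ((hR₂ _ _).mpr ⟨rfl, ha1⟩) ?_
      refine Relation.ReflTransGen.head (b := Sum.inl ⟨(k₁, by'), le_refl _, hk.le, hb3⟩)
        ((hJ₂₁ _ _).mpr ⟨rfl, rfl⟩) ?_
      exact Relation.ReflTransGen.single ((hR₁ _ _).mpr ⟨rfl, hb1⟩)
    | Sum.inr a, Sum.inr b =>
      obtain ⟨⟨ax, ay⟩, ha1, ha2, ha3⟩ := a
      obtain ⟨⟨bx, by'⟩, hb1, hb2, hb3⟩ := b
      refine Relation.ReflTransGen.head (b := Sum.inr ⟨(k₁, ay), le_refl _, hk.le, ha3⟩)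
        ((hR₂ _ _).mpr ⟨rfl, ha1⟩) ?_
      refine Relation.ReflTransGen.head
        (b := Sum.inl ⟨(k₁, h₁+1), le_refl _, hk.le, by norm_num⟩)
        ((hJ₂₁ _ _).mpr ⟨rfl, rfl⟩) ?_
      refine Relation.ReflTransGen.head
        (b := Sum.inl ⟨(k₂, h₁+1), hk.le, le_refl _, by norm_num⟩)
        ((hR₁ _ _).mpr ⟨rfl, hk.le⟩) ?_
      refine Relation.ReflTransGen.head (b := Sum.inr ⟨(k₂, by'), hk.le, le_refl _, hb3⟩)
        ((hJ₁₂ _ _).mpr ⟨rfl, rfl⟩) ?_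
      exact Relation.ReflTransGen.single ((hR₂ _ _).mpr ⟨rfl, hb2⟩)
end
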